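/- arXiv:1001.4866 — 3 statements merged into one kernel-verified Lean document; each statement's English description precedes it below -/
import Mathlib

section
/- For every integer N ≥ 2 and all masses m_j > 0, the function V_m attains its global minimum: there exists a configuration ζ̄ = (ζ̄₁,…,ζ̄_N) ∈ (ℝ²)^N with pairwise distinct components such that V_m(ζ̄) ≤ V_m(ζ) for every configuration ζ ∈ (ℝ²)^N with pairwise distinct components. -/
open Finset

/-- The potential `V_m(ζ) = (1/(8π)) Σ_{j≠k} m_j m_k/|ζ_k−ζ_j| + (1/2) Σ_j m_j |ζ_j|²`
on configurations of `N` points in the plane, identified with `ℂ`. -/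
noncomputable def Vm (N : ℕ) (m : Fin N → ℝ) (ζ : Fin N → ℂ) : ℝ :=
  (1 / (8 * Real.pi)) * ∑ j : Fin N, ∑ k ∈ Finset.univ.erase j, m j * m k / ‖ζ k - ζ j‖
    + (1 / 2) * ∑ j : Fin N, m j * ‖ζ j‖ ^ 2

lemma Vm_first_nonneg (N : ℕ) (m : Fin N → ℝ) (hm : ∀ j, 0 < m j) (ζ : Fin N → ℂ) :
    0 ≤ (1 / (8 * Real.pi)) * ∑ j : Fin N, ∑ k ∈ Finset.univ.erase j,
      m j * m k / ‖ζ k - ζ j‖ := by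
  apply mul_nonneg (by positivity)
  refine Finset.sum_nonneg fun j _ => Finset.sum_nonneg fun k _ => ?_
  exact div_nonneg (mul_nonneg (hm j).le (hm k).le) (norm_nonneg _)

lemma Vm_second_nonneg (N : ℕ) (m : Fin N → ℝ) (hm : ∀ j, 0 < m j) (ζ : Fin N → ℂ) :
    0 ≤ (1 / 2) * ∑ j : Fin N, m j * ‖ζ j‖ ^ 2 := by
  apply mul_nonneg (by norm_num)
  exact Finset.sum_nonneg fun j _ => mul_nonneg (hm j).le (by positivity)

lemma le_Vm_sq (N : ℕ) (m : Fin N → ℝ) (hm : ∀ j, 0 < m j) (ζ : Fin N → ℂ) (j : Fin N) :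
    (1 / 2) * (m j * ‖ζ j‖ ^ 2) ≤ Vm N m ζ := by
  have h1 : m j * ‖ζ j‖ ^ 2 ≤ ∑ i : Fin N, m i * ‖ζ i‖ ^ 2 := by
    apply Finset.single_le_sum (f := fun i => m i * ‖ζ i‖ ^ 2)
      (fun i _ => mul_nonneg (hm i).le (by positivity)) (Finset.mem_univ j)
  have := Vm_first_nonneg N m hm ζ
  unfold Vm
  nlinarith
lemma le_Vm_pair (N : ℕ) (m : Fin N → ℝ) (hm : ∀ j, 0 < m j) (ζ : Fin N → ℂ)
    (j k : Fin N) (hjk : j ≠ k) :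
    (1 / (8 * Real.pi)) * (m j * m k / ‖ζ k - ζ j‖) ≤ Vm N m ζ := by
  have hterm : ∀ (j' : Fin N) (k' : Fin N), (0:ℝ) ≤ m j' * m k' / ‖ζ k' - ζ j'‖ :=
    fun j' k' => div_nonneg (mul_nonneg (hm j').le (hm k').le) (norm_nonneg _)
  have h1 : m j * m k / ‖ζ k - ζ j‖ ≤ ∑ k' ∈ Finset.univ.erase j, m j * m k' / ‖ζ k' - ζ j‖ :=
    Finset.single_le_sum (fun k' _ => hterm j k')
      (Finset.mem_erase.mpr ⟨hjk.symm, Finset.mem_univ k⟩)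
  have h2 : ∑ k' ∈ Finset.univ.erase j, m j * m k' / ‖ζ k' - ζ j‖ ≤
      ∑ j' : Fin N, ∑ k' ∈ Finset.univ.erase j', m j' * m k' / ‖ζ k' - ζ j'‖ :=
    Finset.single_le_sum (f := fun j' => ∑ k' ∈ Finset.univ.erase j', m j' * m k' / ‖ζ k' - ζ j'‖)
      (fun j' _ => Finset.sum_nonneg fun k' _ => hterm j' k') (Finset.mem_univ j)
  have hpi : (0:ℝ) < 1 / (8 * Real.pi) := by positivity
  have := Vm_second_nonneg N m hm ζ
  unfold Vm
  nlinarith [mul_le_mul_of_nonneg_left (h1.trans h2) hpi.le]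

/-- `V_m` attains its global minimum over configurations with
pairwise distinct components. -/
theorem stmt4 (N : ℕ) (hN : 2 ≤ N) (m : Fin N → ℝ) (hm : ∀ j, 0 < m j) :
    ∃ ζb : Fin N → ℂ, (∀ j k, j ≠ k → ζb j ≠ ζb k) ∧
      ∀ ζ : Fin N → ℂ, (∀ j k, j ≠ k → ζ j ≠ ζ k) → Vm N m ζb ≤ Vm N m ζ := by
  -- reference configuration
  set ζ₀ : Fin N → ℂ := fun j => (j : ℕ) with hζ₀
  have hζ₀d : ∀ j k : Fin N, j ≠ k → ζ₀ j ≠ ζ₀ k := by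
    intro j k hjk h
    apply hjk
    have : (j : ℕ) = (k : ℕ) := Nat.cast_injective h
    exact Fin.ext this
  set c : ℝ := Vm N m ζ₀ with hc
  have hpi : (0 : ℝ) < Real.pi := Real.pi_pos
  -- c > 0
  have hone : (1 : ℕ) < N := hN
  have hc_pos : 0 < c := by
    have h := le_Vm_sq N m hm ζ₀ ⟨1, hone⟩
    have : ζ₀ ⟨1, hone⟩ = (1 : ℂ) := by simp [hζ₀]
    rw [this] at h
    simp at h
    have := hm ⟨1, hone⟩
    linarith
  -- minimum of masses
  have hne : (Finset.univ : Finset (Fin N)).Nonempty := ⟨⟨0, by omega⟩, Finset.mem_univ _⟩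
  set μ : ℝ := Finset.univ.inf' hne m with hμ
  have hμ_pos : 0 < μ := by
    rw [hμ, Finset.lt_inf'_iff]
    exact fun b _ => hm b
  have hμ_le : ∀ j, μ ≤ m j := fun j => Finset.inf'_le m (Finset.mem_univ j)
  set δ : ℝ := μ ^ 2 / (8 * Real.pi * c) with hδ
  have hδ_pos : 0 < δ := by positivity
  set R : ℝ := Real.sqrt (2 * c / μ) with hR
  have hR_nonneg : 0 ≤ R := Real.sqrt_nonneg _
  -- the compact set
  set S : Set (Fin N → ℂ) :=
    {ζ | (∀ j, ‖ζ j‖ ≤ R) ∧ ∀ j k : Fin N, j ≠ k → δ ≤ ‖ζ k - ζ j‖} with hS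
  -- sublevel sets of distinct configs are in S
  have key : ∀ ζ : Fin N → ℂ, (∀ j k : Fin N, j ≠ k → ζ j ≠ ζ k) → Vm N m ζ ≤ c → ζ ∈ S := by
    intro ζ hd hle
    constructor
    · intro j
      have h := (le_Vm_sq N m hm ζ j).trans hle
      have h2 : ‖ζ j‖ ^ 2 ≤ 2 * c / μ := by
        rw [le_div_iff₀ hμ_pos]
        nlinarith [hμ_le j, (hm j).le, sq_nonneg (‖ζ j‖), hμ_pos]
      calc ‖ζ j‖ = Real.sqrt (‖ζ j‖ ^ 2) := (Real.sqrt_sq (norm_nonneg _)).symm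
        _ ≤ R := Real.sqrt_le_sqrt h2
    · intro j k hjk
      have h := (le_Vm_pair N m hm ζ j k hjk).trans hle
      have hd' : (0:ℝ) < ‖ζ k - ζ j‖ := by
        rw [norm_pos_iff, sub_ne_zero]
        exact hd k j hjk.symm
      have h8 : (0:ℝ) < 8 * Real.pi := by positivity
      have h'' : m j * m k / ‖ζ k - ζ j‖ ≤ 8 * Real.pi * c := by
        have := mul_le_mul_of_nonneg_left h h8.le
        have heq : 8 * Real.pi * (1 / (8 * Real.pi) * (m j * m k / ‖ζ k - ζ j‖))
            = m j * m k / ‖ζ k - ζ j‖ := by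
          field_simp
        rw [heq] at this
        linarith
      have h3 : m j * m k ≤ 8 * Real.pi * c * ‖ζ k - ζ j‖ := (div_le_iff₀ hd').mp h''
      rw [hδ, div_le_iff₀ (by positivity)]
      nlinarith [hμ_le j, hμ_le k, hμ_pos]
  -- ζ₀ ∈ S
  have hζ₀S : ζ₀ ∈ S := key ζ₀ hζ₀d le_rfl
  -- S is compact
  have hS_closed : IsClosed S := by
    have h1 : IsClosed {ζ : Fin N → ℂ | ∀ j, ‖ζ j‖ ≤ R} := by
      have : {ζ : Fin N → ℂ | ∀ j, ‖ζ j‖ ≤ R} = ⋂ j, {ζ : Fin N → ℂ | ‖ζ j‖ ≤ R} := by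
        ext ζ; simp
      rw [this]
      exact isClosed_iInter fun j =>
        isClosed_le ((continuous_apply j).norm) continuous_const
    have h2 : IsClosed {ζ : Fin N → ℂ | ∀ j k : Fin N, j ≠ k → δ ≤ ‖ζ k - ζ j‖} := by
      have : {ζ : Fin N → ℂ | ∀ j k : Fin N, j ≠ k → δ ≤ ‖ζ k - ζ j‖} =
          ⋂ (j) (k) (_ : j ≠ k), {ζ : Fin N → ℂ | δ ≤ ‖ζ k - ζ j‖} := by
        ext ζ; simp
      rw [this]
      exact isClosed_iInter fun j => isClosed_iInter fun k => isClosed_iInter fun _ =>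
        isClosed_le continuous_const (((continuous_apply k).sub (continuous_apply j)).norm)
    have : S = {ζ : Fin N → ℂ | ∀ j, ‖ζ j‖ ≤ R} ∩
        {ζ : Fin N → ℂ | ∀ j k : Fin N, j ≠ k → δ ≤ ‖ζ k - ζ j‖} := by
      ext ζ; simp [hS, Set.mem_setOf_eq, Set.mem_inter_iff]
    rw [this]
    exact h1.inter h2
  have hS_sub : S ⊆ Metric.closedBall 0 R := by
    intro ζ hζ
    rw [Metric.mem_closedBall]
    rw [dist_pi_le_iff hR_nonneg]
    intro j
    simpa [dist_eq_norm] using hζ.1 j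
  have hS_compact : IsCompact S :=
    (isCompact_closedBall (0 : Fin N → ℂ) R).of_isClosed_subset hS_closed hS_sub
  -- Vm is continuous on S
  have hcont : ContinuousOn (Vm N m) S := by
    unfold Vm
    apply ContinuousOn.add
    · apply ContinuousOn.mul continuousOn_const
      apply continuousOn_finset_sum
      intro j _
      apply continuousOn_finset_sum
      intro k hk
      have hkj : j ≠ k := fun h => (Finset.mem_erase.mp hk).1 h.symm
      apply ContinuousOn.div continuousOn_const
      · exact (((continuous_apply k).sub (continuous_apply j)).norm).continuousOn
      · intro ζ hζ
        exact ne_of_gt (lt_of_lt_of_le hδ_pos (hζ.2 j k hkj))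
    · apply Continuous.continuousOn
      apply Continuous.mul continuous_const
      apply continuous_finset_sum
      intro j _
      exact continuous_const.mul (((continuous_apply j).norm).pow 2)
  -- minimizer
  obtain ⟨ζb, hζbS, hmin⟩ := hS_compact.exists_isMinOn ⟨ζ₀, hζ₀S⟩ hcont
  refine ⟨ζb, ?_, ?_⟩
  · intro j k hjk h
    have := hζbS.2 j k hjk
    rw [h, sub_self, norm_zero] at this
    linarith
  · intro ζ hd
    by_cases hle : Vm N m ζ ≤ c
    · exact hmin (key ζ hd hle)
    · have : Vm N m ζb ≤ c := hmin hζ₀S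
      linarith
end

section
/- Let Λ : (ℝ²)^N → ℝ be differentiable and invariant under simultaneous rotations: identifying ℝ² with ℂ, Λ(e^{iα}ξ₁,…,e^{iα}ξ_N) = Λ(ξ₁,…,ξ_N) for all α ∈ ℝ. Let ξ = (ξ₁,…,ξ_N) be a point such that ξ_ℓ = (ξ_{ℓ1}, 0) with ξ_{ℓ1} ≠ 0 for some index ℓ, and suppose that ∂Λ/∂ξ_{kj}(ξ) = 0 for every k = 1,…,N and j = 1,2 with (k,j) ≠ (ℓ,2). Then the full gradient of Λ vanishes at ξ: ∂Λ/∂ξ_{ℓ2}(ξ) = 0 as well, so ξ is a critical point of Λ. -/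
open Complex

/-- let `Λ : (ℝ²)^N → ℝ` (with `ℝ² ≅ ℂ`) be differentiable and invariant
under simultaneous rotations. If `ξ_ℓ = (ξ_{ℓ1},0)` with `ξ_{ℓ1} ≠ 0` and all the partial
derivatives `∂Λ/∂ξ_{kj}(ξ)` vanish except possibly the one with `(k,j) = (ℓ,2)`, then the
full gradient of `Λ` vanishes at `ξ`. Here `∂/∂ξ_{k1}` and `∂/∂ξ_{k2}` are the derivatives
in the directions `Pi.single k 1` and `Pi.single k I` respectively. -/
theorem stmt6 (N : ℕ) (Λ : (Fin N → ℂ) → ℝ) (hdiff : Differentiable ℝ Λ)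
    (hinv : ∀ (α : ℝ) (ξ : Fin N → ℂ),
      Λ (fun k => Complex.exp (α * Complex.I) * ξ k) = Λ ξ)
    (ξ : Fin N → ℂ) (ℓ : Fin N) (hℓim : (ξ ℓ).im = 0) (hℓre : (ξ ℓ).re ≠ 0)
    (h1 : ∀ k : Fin N, fderiv ℝ Λ ξ (Pi.single k 1) = 0)
    (h2 : ∀ k : Fin N, k ≠ ℓ → fderiv ℝ Λ ξ (Pi.single k Complex.I) = 0) :
    fderiv ℝ Λ ξ = 0 := by
  set D := fderiv ℝ Λ ξ with hD
  -- decompose a single vector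
  have hsingle : ∀ (k : Fin N) (z : ℂ),
      D (Pi.single k z) = z.re • D (Pi.single k 1) + z.im • D (Pi.single k I) := by
    intro k z
    have hz : z = z.re • (1 : ℂ) + z.im • I := by
      simp [Complex.real_smul]
    rw [hz, Pi.single_add, Pi.single_smul, Pi.single_smul]
    simp
  -- derivative of the rotation curve
  have hg : HasDerivAt (fun α : ℝ => (fun k => Complex.exp (α * I) * ξ k)) (fun k => I * ξ k) 0 := by
    rw [hasDerivAt_pi]
    intro k
    have h1 : HasDerivAt (fun z : ℂ => Complex.exp (z * I)) I 0 := by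
      have := ((hasDerivAt_id (0 : ℂ)).mul_const I).cexp
      simpa using this
    have h2 : HasDerivAt (fun α : ℝ => Complex.exp ((α : ℂ) * I)) I 0 := by
      have := h1.comp_ofReal (z := 0)
      simpa using this
    simpa using h2.mul_const (ξ k)
  -- composite is constant
  have hcomp : HasDerivAt (fun α : ℝ => Λ (fun k => Complex.exp (α * I) * ξ k))
      (D (fun k => I * ξ k)) 0 := by
    have h0 : (fun k => Complex.exp ((0 : ℝ) * I) * ξ k) = ξ := by
      funext k; simp
    have hF : HasFDerivAt Λ D (fun k => Complex.exp ((0 : ℝ) * I) * ξ k) :=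
      h0.symm ▸ (hdiff ξ).hasFDerivAt
    exact hF.comp_hasDerivAt 0 hg
  have hconst : (fun α : ℝ => Λ (fun k => Complex.exp (α * I) * ξ k)) = fun _ => Λ ξ := by
    funext α; exact hinv α ξ
  have hzero : D (fun k => I * ξ k) = 0 := by
    have := hcomp
    rw [hconst] at this
    have h' := (hasDerivAt_const (0 : ℝ) (Λ ξ)).unique this
    exact h'.symm
  -- rewrite the rotation direction as a sum of singles
  have hsum : (fun k => I * ξ k) = ∑ k : Fin N, Pi.single k (I * ξ k) := by
    funext j
    rw [Finset.sum_apply]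
    simp [Pi.single_apply]
  have hexp : D (fun k => I * ξ k) = (ξ ℓ).re • D (Pi.single ℓ I) := by
    rw [hsum, map_sum]
    rw [Finset.sum_eq_single ℓ]
    · have : (I * ξ ℓ).re = -(ξ ℓ).im := by simp
      rw [hsingle]
      simp [this, hℓim, h1]
    · intro k _ hk
      rw [hsingle]
      simp [h1, h2 k hk]
    · simp
  have hDI : D (Pi.single ℓ I) = 0 := by
    have := hexp.symm.trans hzero
    rcases smul_eq_zero.mp this with h | h
    · exact absurd h hℓre
    · exact h
  -- conclude
  ext v
  have hv : v = ∑ k : Fin N, Pi.single k (v k) := by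
    funext j
    rw [Finset.sum_apply]
    simp [Pi.single_apply]
  rw [ContinuousLinearMap.zero_apply, hv, map_sum]
  apply Finset.sum_eq_zero
  intro k _
  rw [hsingle]
  by_cases hk : k = ℓ
  · subst hk; simp [h1, hDI]
  · simp [h1, h2 k hk]
end

section
/- Let N = 2 and m₁, m₂ > 0, M = m₁ + m₂. A configuration (ζ₁, ζ₂) ∈ (ℝ²)² with ζ₁ ≠ ζ₂ is a critical point of V_m if and only if |ζ₁ − ζ₂| = (M/(4π))^{1/3} and m₁ ζ₁ + m₂ ζ₂ = 0. -/
open Finset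

/-!
Write `r = ζ₀ - ζ₁` and `s = m₀m₁/(4π‖r‖³)`. The two partial gradients of `V_m` are
`m₀ζ₀ - s r` and `m₁ζ₁ + s r`. Their sum is `m₀ζ₀ + m₁ζ₁`, and `m₁` times the first minus `m₀`
times the second is `(m₀m₁ - (m₀ + m₁) s) r`; so, as `r ≠ 0`, both vanish exactly when
`m₀ζ₀ + m₁ζ₁ = 0` and `(m₀ + m₁) s = m₀m₁`, i.e. `‖r‖³ = (m₀ + m₁)/(4π)`.
-/

open ContinuousLinearMap

section InnerProductSpace

variable {E : Type*} [NormedAddCommGroup E] [InnerProductSpace ℝ E]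

theorem hasFDerivAt_norm_inv {x : E} (hx : x ≠ 0) :
    HasFDerivAt (fun y : E => ‖y‖⁻¹) ((-(‖x‖ ^ 3)⁻¹) • innerSL ℝ x) x := by
  have hsqrt := (hasStrictFDerivAt_norm_sq x).hasFDerivAt.sqrt (by simpa using hx)
  simp only [Real.sqrt_sq (norm_nonneg _)] at hsqrt
  refine ((hasDerivAt_inv (norm_ne_zero_iff.mpr hx)).comp_hasFDerivAt x hsqrt).congr_fderiv ?_
  rw [← Nat.cast_smul_eq_nsmul ℝ, smul_smul, smul_smul]
  congr 1
  field_simp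
  ring

theorem sum_innerSL_comp_proj_eq_zero_iff {ι : Type*} [Fintype ι] [DecidableEq ι] (u : ι → E) :
    ∑ i, (innerSL ℝ (u i)).comp (proj i : (ι → E) →L[ℝ] E) = 0 ↔ u = 0 := by
  refine ⟨fun h => funext fun i => ?_, fun h => by simp [h]⟩
  have hi := congrArg (fun L => L (Pi.single i (u i))) h
  simpa [_root_.sum_apply, Pi.single_apply, apply_ite (inner ℝ _)] using hi

theorem hasFDerivAt_twoBody (c a b : ℝ) {ζ : Fin 2 → E} (hζ : ζ 0 ≠ ζ 1) :
    HasFDerivAt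
      (fun η : Fin 2 → E => c * ‖η 0 - η 1‖⁻¹ + (a / 2 * ‖η 0‖ ^ 2 + b / 2 * ‖η 1‖ ^ 2))
      (∑ i, (innerSL ℝ (![a • ζ 0 - (c / ‖ζ 0 - ζ 1‖ ^ 3) • (ζ 0 - ζ 1),
          b • ζ 1 + (c / ‖ζ 0 - ζ 1‖ ^ 3) • (ζ 0 - ζ 1)] i)).comp
        (proj i : (Fin 2 → E) →L[ℝ] E)) ζ := by
  have h0 := hasFDerivAt_apply (𝕜 := ℝ) (F' := fun _ : Fin 2 => E) 0 ζ
  have h1 := hasFDerivAt_apply (𝕜 := ℝ) (F' := fun _ : Fin 2 => E) 1 ζ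
  have hD := (((hasFDerivAt_norm_inv (sub_ne_zero.mpr hζ)).comp ζ (h0.sub h1)).const_mul c).add
    ((h0.norm_sq.const_mul (a / 2)).add (h1.norm_sq.const_mul (b / 2)))
  refine hD.congr_fderiv (ext fun w => ?_)
  simp only [add_apply, smul_apply, comp_apply, sub_apply, proj_apply, coe_innerSL_apply,
    smul_eq_mul, nsmul_eq_mul, Fin.sum_univ_two, Matrix.cons_val_zero,
    Matrix.cons_val_one, inner_sub_left, inner_add_left, inner_sub_right, real_inner_smul_left]
  ring

end InnerProductSpace

theorem balance_iff_centerOfMass {E : Type*} [AddCommGroup E] [Module ℝ E] {a b s : ℝ} {x y : E}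
    (hab : a + b ≠ 0) (hxy : x ≠ y) :
    (a • x - s • (x - y) = 0 ∧ b • y + s • (x - y) = 0) ↔
      ((a + b) * s = a * b ∧ a • x + b • y = 0) := by
  have hr : x - y ≠ 0 := sub_ne_zero.mpr hxy
  constructor
  · rintro ⟨hx, hy⟩
    refine ⟨?_, ?_⟩
    · have hcomb : (a * b - (a + b) * s) • (x - y)
          = b • (a • x - s • (x - y)) - a • (b • y + s • (x - y)) := by module
      rw [hx, hy, smul_zero, smul_zero, sub_self] at hcomb
      linarith [(smul_eq_zero.mp hcomb).resolve_right hr]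
    · calc a • x + b • y = (a • x - s • (x - y)) + (b • y + s • (x - y)) := by module
        _ = 0 := by rw [hx, hy, add_zero]
  · rintro ⟨hs, hcm⟩
    have cancel : ∀ v : E, (a + b) • v = 0 → v = 0 :=
      fun v hv => (smul_eq_zero.mp hv).resolve_left hab
    refine ⟨cancel _ ?_, cancel _ ?_⟩
    · calc (a + b) • (a • x - s • (x - y))
            = a • (a • x + b • y) + (a * b - (a + b) * s) • (x - y) := by module
        _ = 0 := by rw [hcm, hs, sub_self, smul_zero, zero_smul, add_zero]
    · calc (a + b) • (b • y + s • (x - y))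
            = b • (a • x + b • y) + ((a + b) * s - a * b) • (x - y) := by module
        _ = 0 := by rw [hcm, hs, sub_self, smul_zero, zero_smul, add_zero]

theorem add_mul_div_cube_eq_mul_iff {a b r : ℝ} (ha : 0 < a) (hb : 0 < b) (hr : 0 < r) :
    (a + b) * (a * b / (4 * Real.pi) / r ^ 3) = a * b ↔
      r = ((a + b) / (4 * Real.pi)) ^ ((1 : ℝ) / 3) := by
  have := Real.pi_pos
  rw [one_div, Real.eq_rpow_inv hr.le (by positivity) (by norm_num), Real.rpow_ofNat,
    eq_div_iff (by positivity)]
  field_simp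
  exact eq_comm

theorem Vm_two (m : Fin 2 → ℝ) :
    Vm 2 m = fun η => m 0 * m 1 / (4 * Real.pi) * ‖η 0 - η 1‖⁻¹
      + (m 0 / 2 * ‖η 0‖ ^ 2 + m 1 / 2 * ‖η 1‖ ^ 2) := by
  funext η
  simp only [Vm, Fin.sum_univ_two, show (univ.erase (0 : Fin 2)) = {1} from rfl,
    show (univ.erase (1 : Fin 2)) = {0} from rfl, sum_singleton, norm_sub_rev (η 1) (η 0)]
  ring

/-- for `N = 2`, a configuration `(ζ₁,ζ₂)` with `ζ₁ ≠ ζ₂` is a critical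
point of `V_m` if and only if `|ζ₁ − ζ₂| = (M/(4π))^{1/3}` and `m₁ζ₁ + m₂ζ₂ = 0`,
where `M = m₁ + m₂`. -/
theorem stmt8 (m : Fin 2 → ℝ) (hm : ∀ j, 0 < m j)
    (ζ : Fin 2 → ℂ) (hζ : ζ 0 ≠ ζ 1) :
    fderiv ℝ (Vm 2 m) ζ = 0 ↔
      (‖ζ 0 - ζ 1‖ = ((m 0 + m 1) / (4 * Real.pi)) ^ ((1 : ℝ) / 3) ∧
        (m 0 : ℝ) • ζ 0 + (m 1 : ℝ) • ζ 1 = 0) := by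
  rw [Vm_two, (hasFDerivAt_twoBody _ _ _ hζ).fderiv, sum_innerSL_comp_proj_eq_zero_iff,
    Matrix.cons_eq_zero_iff, Matrix.cons_eq_zero_iff,
    and_iff_left (Subsingleton.elim (![] : Fin 0 → ℂ) 0),
    balance_iff_centerOfMass (add_pos (hm 0) (hm 1)).ne' hζ,
    add_mul_div_cube_eq_mul_iff (hm 0) (hm 1) (norm_pos_iff.mpr (sub_ne_zero.mpr hζ))]
end
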